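/- For every integer N such that N ≥ 28 or N ∈ {13, 25, 26}, there exists a real polynomial g ∈ ℝ[x₁,x₂,x₃] with non-negative coefficients such that g(x₁,x₂,x₃) = 1 whenever x₁ + x₂ + x₃ = 1, every triple (a,b,c) ∈ ℕ³ in the support of g satisfies 5 ∣ a + b + 2c, and the support of g has exactly N elements. -/

import Mathlib

/-!
Start from `f = f₅,₂(x₁ + x₂, x₃)`, of rank 13. If `g` has non-negative coefficients, is invariant
and equals `1` on `x₁ + x₂ + x₃ = 1`, then so does the polynomial obtained by replacing a monomial
`c x^m` of `g` by `c x^m f`, and so does the average of two such polynomials, whose support is the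
union of the two supports. Replacing a monomial of maximal degree creates no overlaps and raises the
rank by exactly 12, so it suffices to realise the ranks 13, 26 and 28, …, 39; these come from a few
explicit replacements and averages starting from `f`, whose supports are counted by computation.
-/

open MvPolynomial

namespace MvPolynomial

variable {σ R : Type*}

theorem support_add_of_coeff_nonneg [CommSemiring R] [PartialOrder R] [IsOrderedAddMonoid R]
    [DecidableEq σ] {p q : MvPolynomial σ R} (hp : ∀ α, 0 ≤ p.coeff α) (hq : ∀ α, 0 ≤ q.coeff α) :
    (p + q).support = p.support ∪ q.support := by
  ext α
  simp only [mem_support_iff, coeff_add, Finset.mem_union, ne_eq,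
    add_eq_zero_iff_of_nonneg (hp α) (hq α), not_and_or]

section ListSum

variable [CommSemiring R] [PartialOrder R]

theorem coeff_monomial_nonneg {r : R} (hr : 0 ≤ r) (s α : σ →₀ ℕ) :
    0 ≤ (monomial s r).coeff α := by
  classical
  rw [coeff_monomial]
  split_ifs
  exacts [hr, le_rfl]

variable [IsOrderedAddMonoid R] {L : List ((σ →₀ ℕ) × R)}

theorem coeff_list_sum_monomial_nonneg (hL : ∀ p ∈ L, 0 ≤ p.2) (α : σ →₀ ℕ) :
    0 ≤ (L.map fun p => monomial p.1 p.2).sum.coeff α := by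
  induction L with
  | nil => simp
  | cons p L ih =>
    rw [List.map_cons, List.sum_cons, coeff_add]
    exact add_nonneg (coeff_monomial_nonneg (hL p List.mem_cons_self) _ _)
      (ih fun q hq => hL q (List.mem_cons_of_mem p hq))

theorem support_list_sum_monomial [DecidableEq σ] (hL : ∀ p ∈ L, 0 < p.2) :
    (L.map fun p => monomial p.1 p.2).sum.support = (L.map Prod.fst).toFinset := by
  induction L with
  | nil => simp
  | cons p L ih =>
    classical
    have hp : 0 < p.2 := hL p List.mem_cons_self
    have hL' : ∀ q ∈ L, 0 < q.2 := fun q hq => hL q (List.mem_cons_of_mem p hq)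
    rw [List.map_cons, List.sum_cons,
      support_add_of_coeff_nonneg (coeff_monomial_nonneg hp.le _)
        (coeff_list_sum_monomial_nonneg fun q hq => (hL' q hq).le),
      support_monomial, if_neg hp.ne', ih hL', List.map_cons,
      List.toFinset_cons, Finset.insert_eq]

end ListSum

theorem support_monomial_mul [CommSemiring R] [NoZeroDivisors R] (p : MvPolynomial σ R)
    {r : R} (hr : r ≠ 0) (s : σ →₀ ℕ) :
    (monomial s r * p).support = p.support.map (addLeftEmbedding s) := by
  classical
  ext α
  simp only [Finset.mem_map, mem_support_iff, coeff_monomial_mul', addLeftEmbedding_apply]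
  constructor
  · intro h
    split_ifs at h with hs
    · exact ⟨α - s, right_ne_zero_of_mul h, add_tsub_cancel_of_le hs⟩
    · exact absurd rfl h
  · rintro ⟨β, hβ, rfl⟩
    simp [hr, hβ]

section Replace

variable [CommRing R]

noncomputable def replaceMonomial (g : MvPolynomial σ R) (m : σ →₀ ℕ) (f : MvPolynomial σ R) :
    MvPolynomial σ R :=
  g - monomial m (g.coeff m) + monomial m (g.coeff m) * f

theorem coeff_sub_monomial_coeff [DecidableEq σ] (g : MvPolynomial σ R) (m α : σ →₀ ℕ) :
    (g - monomial m (g.coeff m)).coeff α = if α = m then 0 else g.coeff α := by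
  rw [coeff_sub, coeff_monomial]
  split_ifs with h₁ h₂ h₂
  · rw [h₂, sub_self]
  · exact absurd h₁.symm h₂
  · exact absurd h₂.symm h₁
  · rw [sub_zero]

theorem support_sub_monomial_coeff [DecidableEq σ] (g : MvPolynomial σ R) (m : σ →₀ ℕ) :
    (g - monomial m (g.coeff m)).support = g.support.erase m := by
  ext α
  rw [mem_support_iff, coeff_sub_monomial_coeff, Finset.mem_erase, mem_support_iff]
  split_ifs with h <;> simp [h]

theorem eval_replaceMonomial (g f : MvPolynomial σ R) (m : σ →₀ ℕ) (x : σ → R)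
    (hf : eval x f = 1) : eval x (replaceMonomial g m f) = eval x g := by
  rw [replaceMonomial, map_add, map_sub, map_mul, hf, mul_one, sub_add_cancel]

variable [PartialOrder R] {g f : MvPolynomial σ R}

theorem coeff_sub_monomial_coeff_nonneg (hg : ∀ α, 0 ≤ g.coeff α) (m α : σ →₀ ℕ) :
    0 ≤ (g - monomial m (g.coeff m)).coeff α := by
  classical
  rw [coeff_sub_monomial_coeff]
  split_ifs
  exacts [le_rfl, hg α]

variable [IsOrderedRing R]

theorem coeff_monomial_coeff_mul_nonneg (hg : ∀ α, 0 ≤ g.coeff α) (hf : ∀ α, 0 ≤ f.coeff α)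
    (m α : σ →₀ ℕ) : 0 ≤ (monomial m (g.coeff m) * f).coeff α := by
  rw [coeff_monomial_mul']
  split_ifs
  exacts [mul_nonneg (hg m) (hf _), le_rfl]

theorem coeff_replaceMonomial_nonneg (hg : ∀ α, 0 ≤ g.coeff α) (hf : ∀ α, 0 ≤ f.coeff α)
    (m α : σ →₀ ℕ) : 0 ≤ (replaceMonomial g m f).coeff α := by
  rw [replaceMonomial, coeff_add]
  exact add_nonneg (coeff_sub_monomial_coeff_nonneg hg m α)
    (coeff_monomial_coeff_mul_nonneg hg hf m α)

theorem support_replaceMonomial [DecidableEq σ] [NoZeroDivisors R] (hg : ∀ α, 0 ≤ g.coeff α)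
    (hf : ∀ α, 0 ≤ f.coeff α) {m : σ →₀ ℕ} (hm : m ∈ g.support) :
    (replaceMonomial g m f).support = g.support.erase m ∪ f.support.map (addLeftEmbedding m) := by
  rw [replaceMonomial, support_add_of_coeff_nonneg (coeff_sub_monomial_coeff_nonneg hg m)
    (coeff_monomial_coeff_mul_nonneg hg hf m), support_sub_monomial_coeff,
    support_monomial_mul _ (mem_support_iff.mp hm)]

theorem support_replaceMonomial_subset [DecidableEq σ] [NoZeroDivisors R]
    {M : AddSubmonoid (σ →₀ ℕ)} (hg : ∀ α, 0 ≤ g.coeff α) (hf : ∀ α, 0 ≤ f.coeff α)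
    {m : σ →₀ ℕ} (hm : m ∈ g.support)
    (hgM : ∀ α ∈ g.support, α ∈ M) (hfM : ∀ α ∈ f.support, α ∈ M) :
    ∀ α ∈ (replaceMonomial g m f).support, α ∈ M := by
  rw [support_replaceMonomial hg hf hm]
  intro α hα
  rcases Finset.mem_union.mp hα with hα | hα
  · exact hgM α (Finset.mem_of_mem_erase hα)
  · obtain ⟨β, hβ, rfl⟩ := Finset.mem_map.mp hα
    exact M.add_mem (hgM m hm) (hfM β hβ)

theorem card_support_replaceMonomial [NoZeroDivisors R] (hg : ∀ α, 0 ≤ g.coeff α)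
    (hf : ∀ α, 0 ≤ f.coeff α) (hf₀ : 0 ∉ f.support) {m : σ →₀ ℕ} (hm : m ∈ g.support)
    (hmax : ∀ β ∈ g.support, β.degree ≤ m.degree) :
    (replaceMonomial g m f).support.card + 1 = g.support.card + f.support.card := by
  classical
  have hdisj : Disjoint (g.support.erase m) (f.support.map (addLeftEmbedding m)) := by
    rw [Finset.disjoint_right]
    rintro _ hα hα'
    obtain ⟨β, hβ, rfl⟩ := Finset.mem_map.mp hα
    have hle := hmax _ (Finset.mem_of_mem_erase hα')
    have hpos : 0 < β.degree := Nat.pos_of_ne_zero fun h =>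
      hf₀ (Finsupp.degree_eq_zero_iff β |>.mp h ▸ hβ)
    rw [addLeftEmbedding_apply, map_add] at hle
    omega
  rw [support_replaceMonomial hg hf hm, Finset.card_union_of_disjoint hdisj, Finset.card_map,
    Finset.card_erase_of_mem hm]
  have := Finset.card_pos.mpr ⟨m, hm⟩
  omega

end Replace

end MvPolynomial

/-- `ωI₂ ⊕ ω²I₁` multiplies `x^α` by `ω ^ (α₀ + α₁ + 2α₂)`. -/
def invariantExponents : AddSubmonoid (Fin 3 →₀ ℕ) where
  carrier := {α | 5 ∣ α 0 + α 1 + 2 * α 2}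
  zero_mem' := by simp
  add_mem' := by
    intro α β hα hβ
    simp only [Set.mem_ofPred_eq, Finsupp.add_apply] at *
    omega

structure IsInvariantSpherePoly (g : MvPolynomial (Fin 3) ℝ) : Prop where
  coeff_nonneg : ∀ α, 0 ≤ g.coeff α
  eval_eq_one : ∀ x₁ x₂ x₃ : ℝ, x₁ + x₂ + x₃ = 1 → eval ![x₁, x₂, x₃] g = 1
  mem_invariantExponents : ∀ α ∈ g.support, α ∈ invariantExponents

namespace IsInvariantSpherePoly

variable {g f : MvPolynomial (Fin 3) ℝ}

theorem support_nonempty (hg : IsInvariantSpherePoly g) : g.support.Nonempty := by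
  rw [Finset.nonempty_iff_ne_empty, Ne, support_eq_empty]
  rintro rfl
  simpa using hg.eval_eq_one 1 0 0 (by norm_num)

theorem replaceMonomial (hg : IsInvariantSpherePoly g) (hf : IsInvariantSpherePoly f)
    {m : Fin 3 →₀ ℕ} (hm : m ∈ g.support) : IsInvariantSpherePoly (g.replaceMonomial m f) where
  coeff_nonneg := coeff_replaceMonomial_nonneg hg.coeff_nonneg hf.coeff_nonneg m
  eval_eq_one x₁ x₂ x₃ hx := by
    rw [eval_replaceMonomial _ _ _ _ (hf.eval_eq_one _ _ _ hx), hg.eval_eq_one _ _ _ hx]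
  mem_invariantExponents := support_replaceMonomial_subset hg.coeff_nonneg hf.coeff_nonneg hm
    hg.mem_invariantExponents hf.mem_invariantExponents

theorem support_midpoint (hg : IsInvariantSpherePoly g) (hf : IsInvariantSpherePoly f) :
    ((1 / 2 : ℝ) • (g + f)).support = g.support ∪ f.support := by
  rw [support_smul_eq (by norm_num), support_add_of_coeff_nonneg hg.coeff_nonneg hf.coeff_nonneg]

theorem midpoint (hg : IsInvariantSpherePoly g) (hf : IsInvariantSpherePoly f) :
    IsInvariantSpherePoly ((1 / 2 : ℝ) • (g + f)) where
  coeff_nonneg α := by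
    rw [coeff_smul, coeff_add]
    have := add_nonneg (hg.coeff_nonneg α) (hf.coeff_nonneg α)
    positivity
  eval_eq_one x₁ x₂ x₃ hx := by
    rw [smul_eval, map_add, hg.eval_eq_one _ _ _ hx, hf.eval_eq_one _ _ _ hx]
    norm_num
  mem_invariantExponents α hα := by
    rw [support_midpoint hg hf, Finset.mem_union] at hα
    exact hα.elim (hg.mem_invariantExponents α) (hf.mem_invariantExponents α)

end IsInvariantSpherePoly

/-- `f₅,₂(x₁ + x₂, x₃)` with `f₅,₂(x, y) = x⁵ + 5x³y + 5xy² + y⁵`. -/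
noncomputable def canonicalInvariant : MvPolynomial (Fin 3) ℝ :=
  (X 0 + X 1) ^ 5 + 5 * (X 0 + X 1) ^ 3 * X 2 + 5 * (X 0 + X 1) * X 2 ^ 2 + X 2 ^ 5

theorem f52_eq_one {x y : ℝ} (h : x + y = 1) :
    x ^ 5 + 5 * x ^ 3 * y + 5 * x * y ^ 2 + y ^ 5 = 1 := by
  obtain rfl : y = 1 - x := by linarith
  ring

-- Exponents written as triples, so that supports become decidable finite sets.
noncomputable def exponent (t : ℕ × ℕ × ℕ) : Fin 3 →₀ ℕ :=
  Finsupp.single 0 t.1 + Finsupp.single 1 t.2.1 + Finsupp.single 2 t.2.2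

@[simp] theorem exponent_apply_zero (t : ℕ × ℕ × ℕ) : exponent t 0 = t.1 := by
  simp [exponent]

@[simp] theorem exponent_apply_one (t : ℕ × ℕ × ℕ) : exponent t 1 = t.2.1 := by
  simp [exponent]

@[simp] theorem exponent_apply_two (t : ℕ × ℕ × ℕ) : exponent t 2 = t.2.2 := by
  simp [exponent]

theorem exponent_injective : Function.Injective exponent := fun s t h => by
  have h₀ := DFunLike.congr_fun h 0
  have h₁ := DFunLike.congr_fun h 1
  have h₂ := DFunLike.congr_fun h 2
  simp only [exponent_apply_zero, exponent_apply_one, exponent_apply_two] at h₀ h₁ h₂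
  exact Prod.ext h₀ (Prod.ext h₁ h₂)

theorem exponent_add (s t : ℕ × ℕ × ℕ) : exponent (s + t) = exponent s + exponent t := by
  simp only [exponent, Prod.fst_add, Prod.snd_add, Finsupp.single_add]
  abel

theorem monomial_exponent (a b c : ℕ) (r : ℝ) :
    monomial (exponent (a, b, c)) r = C r * X 0 ^ a * X 1 ^ b * X 2 ^ c := by
  simp only [exponent, X_pow_eq_monomial, C_mul_monomial, monomial_mul, mul_one]

def canonicalTerms : List ((ℕ × ℕ × ℕ) × ℝ) :=
  [((5,0,0),1), ((4,1,0),5), ((3,2,0),10), ((2,3,0),10), ((1,4,0),5), ((0,5,0),1),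
   ((3,0,1),5), ((2,1,1),15), ((1,2,1),15), ((0,3,1),5),
   ((1,0,2),5), ((0,1,2),5), ((0,0,5),1)]

def canonicalSupport : Finset (ℕ × ℕ × ℕ) := (canonicalTerms.map Prod.fst).toFinset

theorem exponent_mem_invariantExponents_iff (t : ℕ × ℕ × ℕ) :
    exponent t ∈ invariantExponents ↔ 5 ∣ t.1 + t.2.1 + 2 * t.2.2 := by
  change 5 ∣ exponent t 0 + exponent t 1 + 2 * exponent t 2 ↔ _
  simp only [exponent_apply_zero, exponent_apply_one, exponent_apply_two]

theorem canonicalInvariant_eq_sum :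
    canonicalInvariant =
      ((canonicalTerms.map fun p => (exponent p.1, p.2)).map fun p => monomial p.1 p.2).sum := by
  simp only [canonicalInvariant, canonicalTerms, List.map_cons, List.map_nil, List.sum_cons,
    List.sum_nil, monomial_exponent, map_one, map_ofNat]
  ring

theorem support_canonicalInvariant :
    canonicalInvariant.support = canonicalSupport.image exponent := by
  rw [canonicalInvariant_eq_sum, support_list_sum_monomial (by simp [canonicalTerms])]
  ext α
  simp [canonicalSupport]

theorem isInvariantSpherePoly_canonicalInvariant : IsInvariantSpherePoly canonicalInvariant where
  coeff_nonneg := by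
    rw [canonicalInvariant_eq_sum]
    exact coeff_list_sum_monomial_nonneg (by norm_num [canonicalTerms])
  eval_eq_one x₁ x₂ x₃ hx := by
    simpa [canonicalInvariant] using f52_eq_one (x := x₁ + x₂) (y := x₃) hx
  mem_invariantExponents α hα := by
    rw [support_canonicalInvariant, Finset.mem_image] at hα
    obtain ⟨t, ht, rfl⟩ := hα
    rw [exponent_mem_invariantExponents_iff]
    revert t
    decide

theorem card_support_canonicalInvariant : canonicalInvariant.support.card = 13 := by
  rw [support_canonicalInvariant, Finset.card_image_of_injective _ exponent_injective]
  decide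

theorem zero_notMem_support_canonicalInvariant : 0 ∉ canonicalInvariant.support := by
  rw [support_canonicalInvariant, Finset.mem_image]
  rintro ⟨t, ht, h⟩
  obtain rfl : t = 0 := exponent_injective (by rw [h]; simp [exponent])
  exact absurd ht (by decide)

def IsRealizableSupport (A : Finset (ℕ × ℕ × ℕ)) : Prop :=
  ∃ g, IsInvariantSpherePoly g ∧ g.support = A.image exponent

theorem isRealizableSupport_canonicalSupport : IsRealizableSupport canonicalSupport :=
  ⟨_, isInvariantSpherePoly_canonicalInvariant, support_canonicalInvariant⟩

namespace IsRealizableSupport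

variable {A B : Finset (ℕ × ℕ × ℕ)}

theorem replace (hA : IsRealizableSupport A) {m : ℕ × ℕ × ℕ} (hm : m ∈ A) :
    IsRealizableSupport (A.erase m ∪ canonicalSupport.image (m + ·)) := by
  obtain ⟨g, hg, hgA⟩ := hA
  have hm' : exponent m ∈ g.support := hgA ▸ Finset.mem_image_of_mem _ hm
  refine ⟨_, hg.replaceMonomial isInvariantSpherePoly_canonicalInvariant hm', ?_⟩
  rw [support_replaceMonomial hg.coeff_nonneg isInvariantSpherePoly_canonicalInvariant.coeff_nonneg
    hm', hgA, support_canonicalInvariant, Finset.image_union,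
    Finset.image_erase exponent_injective, Finset.map_eq_image, Finset.image_image,
    Finset.image_image]
  simp only [Function.comp_def, addLeftEmbedding_apply, exponent_add]

theorem union (hA : IsRealizableSupport A) (hB : IsRealizableSupport B) :
    IsRealizableSupport (A ∪ B) := by
  obtain ⟨g, hg, hgA⟩ := hA
  obtain ⟨f, hf, hfB⟩ := hB
  exact ⟨_, hg.midpoint hf, by rw [hg.support_midpoint hf, hgA, hfB, Finset.image_union]⟩

end IsRealizableSupport

def HasInvariantSpherePolyOfRank (N : ℕ) : Prop :=
  ∃ g, IsInvariantSpherePoly g ∧ g.support.card = N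

theorem IsRealizableSupport.hasInvariantSpherePolyOfRank {A : Finset (ℕ × ℕ × ℕ)}
    (hA : IsRealizableSupport A) {N : ℕ} (hN : A.card = N) : HasInvariantSpherePolyOfRank N := by
  obtain ⟨g, hg, hgA⟩ := hA
  exact ⟨g, hg, by rw [hgA, Finset.card_image_of_injective _ exponent_injective, hN]⟩

theorem HasInvariantSpherePolyOfRank.add_twelve {N : ℕ} (hN : HasInvariantSpherePolyOfRank N) :
    HasInvariantSpherePolyOfRank (N + 12) := by
  obtain ⟨g, hg, rfl⟩ := hN
  obtain ⟨m, hm, hmax⟩ := g.support.exists_max_image Finsupp.degree hg.support_nonempty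
  have hf := isInvariantSpherePoly_canonicalInvariant
  refine ⟨_, hg.replaceMonomial hf hm, ?_⟩
  have := card_support_replaceMonomial hg.coeff_nonneg hf.coeff_nonneg
    zero_notMem_support_canonicalInvariant hm hmax
  rw [card_support_canonicalInvariant] at this
  omega

theorem hasInvariantSpherePolyOfRank_thirteen : HasInvariantSpherePolyOfRank 13 :=
  ⟨_, isInvariantSpherePoly_canonicalInvariant, card_support_canonicalInvariant⟩

theorem hasInvariantSpherePolyOfRank_twentySix : HasInvariantSpherePolyOfRank 26 := by
  have F := isRealizableSupport_canonicalSupport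
  exact (F.union (F.replace (m := (0, 0, 5)) (by decide))).hasInvariantSpherePolyOfRank (by decide)

set_option maxRecDepth 4000 in
theorem hasInvariantSpherePolyOfRank_of_mem_Icc {N : ℕ} (hN : N ∈ Set.Icc 28 39) :
    HasInvariantSpherePolyOfRank N := by
  obtain ⟨h₁, h₂⟩ := hN
  have F := isRealizableSupport_canonicalSupport
  have F₀₀₅ := F.replace (m := (0, 0, 5)) (by decide)
  have F₀₁₂ := F.replace (m := (0, 1, 2)) (by decide)
  have F₀₃₁ := F.replace (m := (0, 3, 1)) (by decide)
  have r₂₈ := F₀₁₂.replace (m := (1, 0, 2)) (by decide)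
  have r₃₁ := F₀₁₂.replace (m := (0, 3, 1)) (by decide)
  have r₃₃ := F₀₁₂.replace (m := (3, 0, 1)) (by decide)
  have r₃₅ := F₀₁₂.replace (m := (0, 5, 0)) (by decide)
  have r₃₆ := F₀₀₅.replace (m := (0, 1, 2)) (by decide)
  have r₃₇ := F₀₀₅.replace (m := (0, 0, 10)) (by decide)
  have r₃₉ := F₀₃₁.replace (m := (3, 0, 1)) (by decide)
  interval_cases N
  exacts [r₂₈.hasInvariantSpherePolyOfRank (by decide),
    (F₀₁₂.union r₂₈).hasInvariantSpherePolyOfRank (by decide),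
    (F.union r₂₈).hasInvariantSpherePolyOfRank (by decide),
    r₃₁.hasInvariantSpherePolyOfRank (by decide),
    (F₀₁₂.union r₃₁).hasInvariantSpherePolyOfRank (by decide),
    r₃₃.hasInvariantSpherePolyOfRank (by decide),
    (F₀₁₂.union r₃₃).hasInvariantSpherePolyOfRank (by decide),
    r₃₅.hasInvariantSpherePolyOfRank (by decide),
    r₃₆.hasInvariantSpherePolyOfRank (by decide),
    r₃₇.hasInvariantSpherePolyOfRank (by decide),
    (F.union r₃₆).hasInvariantSpherePolyOfRank (by decide),
    (F₀₁₂.union r₃₉).hasInvariantSpherePolyOfRank (by decide)]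

theorem hasInvariantSpherePolyOfRank_of_le {N : ℕ} (hN : 28 ≤ N) :
    HasInvariantSpherePolyOfRank N := by
  induction N using Nat.strong_induction_on with
  | _ N ih =>
    by_cases h : N ≤ 39
    · exact hasInvariantSpherePolyOfRank_of_mem_Icc ⟨hN, h⟩
    · obtain ⟨M, rfl⟩ : ∃ M, N = M + 12 := ⟨N - 12, by omega⟩
      exact (ih M (by omega) (by omega)).add_twelve

/-- For every `N` with `N ≥ 28` or `N ∈ {13, 25, 26}` there is a polynomial in
three variables with non-negative coefficients, equal to `1` on
`x₁ + x₂ + x₃ = 1`, invariant under `⟨ωI₂ ⊕ ω²I₁⟩` for `ω` a primitive fifth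
root of unity (`5 ∣ a + b + 2c` on the support), with support of cardinality
exactly `N`. -/
theorem stmt_12 (N : ℕ) (hN : 28 ≤ N ∨ N = 13 ∨ N = 25 ∨ N = 26) :
    ∃ g : MvPolynomial (Fin 3) ℝ,
      (∀ α, 0 ≤ g.coeff α) ∧
      (∀ x₁ x₂ x₃ : ℝ, x₁ + x₂ + x₃ = 1 → eval ![x₁, x₂, x₃] g = 1) ∧
      (∀ α ∈ g.support, 5 ∣ α 0 + α 1 + 2 * α 2) ∧
      g.support.card = N := by
  have hrank : HasInvariantSpherePolyOfRank N := by
    rcases hN with hN | rfl | rfl | rfl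
    · exact hasInvariantSpherePolyOfRank_of_le hN
    · exact hasInvariantSpherePolyOfRank_thirteen
    · exact hasInvariantSpherePolyOfRank_thirteen.add_twelve
    · exact hasInvariantSpherePolyOfRank_twentySix
  obtain ⟨g, hg, hcard⟩ := hrank
  exact ⟨g, hg.coeff_nonneg, hg.eval_eq_one, hg.mem_invariantExponents, hcard⟩
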